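/- arXiv:math/0703636 — 5 statements merged into one kernel-verified Lean document; each statement's English description precedes it below -/
import Mathlib

section
/- Let G be an abelian group generated by a finite set X. Then G has only finitely many dead ends with respect to the word metric d_X. -/
/-- The word length of `g` with respect to the generating set `X`
(words may use generators and their inverses). -/
noncomputable def wordLength {G : Type*} [Group G] (X : Set G) (g : G) : ℕ :=
  sInf {n | ∃ l : List G, l.length = n ∧ (∀ x ∈ l, x ∈ X ∨ x⁻¹ ∈ X) ∧ l.prod = g}

/-- `g` is a dead end with respect to `X` if no generator (or inverse of a
generator) moves `g` further from the identity:
the ball of radius `1` around `g` is contained in the ball of radius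
`wordLength X g` around `1`. -/
def IsDeadEnd {G : Type*} [Group G] (X : Set G) (g : G) : Prop :=
  ∀ x : G, (x ∈ X ∨ x⁻¹ ∈ X) → wordLength X (g * x) ≤ wordLength X g

/-! In an abelian group an element is determined by the multiset of letters of any word
spelling it, so every element has a geodesic multiset over the finite alphabet `X ∪ X⁻¹`.
If `g` is a dead end with geodesic multiset `s` and `s` is properly contained in a geodesic
multiset `t = s + y + r`, then `|t| ≤ |g y| + |r| ≤ |g| + |r| < |t|`. Hence the geodesic
multisets of dead ends form an antichain, which is finite by Dickson's lemma. -/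

open scoped Pointwise

instance Multiset.wellQuasiOrderedLE {α : Type*} [Finite α] :
    WellQuasiOrderedLE (Multiset α) := by
  classical exact Finsupp.orderIsoMultiset.wellQuasiOrderedLE_iff.1 inferInstance

abbrev Letter {G : Type*} [Group G] (X : Set G) : Type _ := ↥(X ∪ X⁻¹)

section Group

variable {G : Type*} [Group G] {X : Set G}

theorem wordLength_list_prod_le_length (l : List (Letter X)) :
    wordLength X (l.map (↑)).prod ≤ l.length := by
  refine Nat.sInf_le ⟨l.map (↑), List.length_map _, fun x hx => ?_, rfl⟩
  obtain ⟨y, -, rfl⟩ := List.mem_map.1 hx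
  exact y.2

theorem exists_list_length_eq_wordLength {g : G} (hg : g ∈ Subgroup.closure X) :
    ∃ l : List (Letter X), (l.map (↑)).prod = g ∧ l.length = wordLength X g := by
  rw [← Subgroup.mem_toSubmonoid, Subgroup.closure_toSubmonoid] at hg
  obtain ⟨l, hl, hprod⟩ := Submonoid.exists_list_of_mem_closure hg
  obtain ⟨k, hlen, hk : ∀ x ∈ k, x ∈ X ∪ X⁻¹, hprod⟩ : wordLength X g ∈
      {n | ∃ l : List G, l.length = n ∧ (∀ x ∈ l, x ∈ X ∨ x⁻¹ ∈ X) ∧ l.prod = g} :=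
    Nat.sInf_mem ⟨_, l, rfl, hl, hprod⟩
  exact ⟨k.attachWith _ hk, by rw [List.attachWith_map_subtype_val, hprod],
    by rw [List.length_attachWith, hlen]⟩

theorem wordLength_mul_list_prod_le {g : G} (hg : g ∈ Subgroup.closure X) (l : List (Letter X)) :
    wordLength X (g * (l.map (↑)).prod) ≤ wordLength X g + l.length := by
  obtain ⟨k, rfl, hk⟩ := exists_list_length_eq_wordLength hg
  calc _ = wordLength X ((k ++ l).map (↑)).prod := by simp
    _ ≤ (k ++ l).length := wordLength_list_prod_le_length _
    _ = _ := by simp [hk]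

end Group

section CommGroup

variable {G : Type*} [CommGroup G] {X : Set G}

theorem wordLength_multiset_prod_le_card (s : Multiset (Letter X)) :
    wordLength X (s.map (↑)).prod ≤ Multiset.card s := by
  induction s using Quotient.inductionOn with
  | h l => simpa using wordLength_list_prod_le_length l

theorem wordLength_mul_multiset_prod_le {g : G} (hg : g ∈ Subgroup.closure X)
    (s : Multiset (Letter X)) :
    wordLength X (g * (s.map (↑)).prod) ≤ wordLength X g + Multiset.card s := by
  induction s using Quotient.inductionOn with
  | h l => simpa using wordLength_mul_list_prod_le hg l

theorem multiset_prod_mem_closure (s : Multiset (Letter X)) :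
    (s.map (↑)).prod ∈ Subgroup.closure X := by
  refine Subgroup.multiset_prod_mem _ _ fun x hx => ?_
  obtain ⟨⟨x, h | h⟩, -, rfl⟩ := Multiset.mem_map.1 hx
  · exact Subgroup.subset_closure h
  · simpa using (Subgroup.closure X).inv_mem (Subgroup.subset_closure h)

def IsGeodesic (X : Set G) (s : Multiset (Letter X)) : Prop :=
  wordLength X (s.map (↑)).prod = Multiset.card s

theorem exists_isGeodesic {g : G} (hg : g ∈ Subgroup.closure X) :
    ∃ s : Multiset (Letter X), (s.map (↑)).prod = g ∧ IsGeodesic X s := by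
  obtain ⟨l, hl, hlen⟩ := exists_list_length_eq_wordLength hg
  refine ⟨l, by simpa using hl, ?_⟩
  simp only [IsGeodesic, Multiset.map_coe, Multiset.prod_coe, Multiset.coe_card, hl, hlen]

theorem IsGeodesic.not_isDeadEnd_of_lt {s t : Multiset (Letter X)} (ht : IsGeodesic X t)
    (hst : s < t) : ¬ IsDeadEnd X (s.map (↑)).prod := by
  intro hs
  obtain ⟨y, hy⟩ := Multiset.lt_iff_cons_le.1 hst
  obtain ⟨r, rfl⟩ := Multiset.le_iff_exists_add.1 hy
  have hstep := hs y y.2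
  have hrest := wordLength_mul_multiset_prod_le (multiset_prod_mem_closure (y ::ₘ s)) r
  have hs_card := wordLength_multiset_prod_le_card s
  simp only [IsGeodesic, Multiset.map_add, Multiset.map_cons, Multiset.prod_add,
    Multiset.prod_cons, Multiset.card_add, Multiset.card_cons] at ht hrest
  rw [mul_comm] at hstep
  omega

end CommGroup

/-- An abelian group generated by a finite set `X` has only finitely many dead
ends with respect to the word metric `d_X`. -/
theorem finitely_many_dead_ends_of_abelian {G : Type*} [CommGroup G] (X : Finset G)
    (hX : Subgroup.closure (X : Set G) = ⊤) :
    {g : G | IsDeadEnd (X : Set G) g}.Finite := by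
  have : Finite (Letter (X : Set G)) := (X.finite_toSet.union X.finite_toSet.inv).to_subtype
  choose m hm using fun g : G => exists_isGeodesic (hX ▸ Subgroup.mem_top g)
  have hinj : Set.InjOn m {g | IsDeadEnd (X : Set G) g} := fun g _ g' _ h => by
    rw [← (hm g).1, h, (hm g').1]
  refine .of_finite_image (WellQuasiOrderedLE.finite_of_isAntichain ?_) hinj
  rintro _ ⟨g, hg, rfl⟩ _ ⟨g', -, rfl⟩ hne hle
  exact (hm g').2.not_isDeadEnd_of_lt (lt_of_le_of_ne hle hne) ((hm g).1.symm ▸ hg)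
end

section
/- Let G be an abelian group generated by a finite set X = {x_1,...,x_m}. If g, h are two distinct dead ends with geodesic representatives recorded as exponent vectors w_g, w_h ∈ ℕ^m (counting the number of occurrences of each generator), then w_g and w_h are crossrelated: neither vector is coordinatewise ≤ the other. -/
lemma exists_word_on {G : Type*} [CommGroup G] {m : ℕ} (x : Fin m → G) (w : Fin m → ℕ)
    (s : Finset (Fin m)) :
    ∃ l : List G, l.length = ∑ i ∈ s, w i ∧ (∀ a ∈ l, a ∈ Set.range x) ∧
      l.prod = ∏ i ∈ s, x i ^ w i := by
  classical
  induction s using Finset.induction_on with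
  | empty => exact ⟨[], by simp, by simp, by simp⟩
  | @insert a s ha ih =>
    obtain ⟨l, hl, hm, hp⟩ := ih
    refine ⟨List.replicate (w a) (x a) ++ l, ?_, ?_, ?_⟩
    · simp [Finset.sum_insert ha, hl]
    · intro b hb
      rcases List.mem_append.1 hb with hb | hb
      · rw [List.eq_of_mem_replicate hb]; exact ⟨a, rfl⟩
      · exact hm b hb
    · rw [List.prod_append, List.prod_replicate, hp, Finset.prod_insert ha]

lemma exists_word {G : Type*} [CommGroup G] {m : ℕ} (x : Fin m → G) (w : Fin m → ℕ) :
    ∃ l : List G, l.length = ∑ i, w i ∧ (∀ a ∈ l, a ∈ Set.range x) ∧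
      l.prod = ∏ i, x i ^ w i :=
  exists_word_on x w Finset.univ

lemma not_le_aux {G : Type*} [CommGroup G] {m : ℕ} (x : Fin m → G)
    (g h : G) (hne : g ≠ h) (hg : IsDeadEnd (Set.range x) g)
    (wg wh : Fin m → ℕ)
    (hwg : ∏ i, x i ^ wg i = g) (hwg' : ∑ i, wg i = wordLength (Set.range x) g)
    (hwh : ∏ i, x i ^ wh i = h) (hwh' : ∑ i, wh i = wordLength (Set.range x) h)
    (hle : ∀ i, wg i ≤ wh i) : False := by
  classical
  have hj : ∃ j, wg j < wh j := by
    by_contra hc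
    push_neg at hc
    have : wg = wh := funext fun i => le_antisymm (hle i) (hc i)
    exact hne (by rw [← hwg, ← hwh, this])
  obtain ⟨j, hj⟩ := hj
  set d : Fin m → ℕ := fun i => if i = j then wh j - wg j - 1 else wh i - wg i with hd
  have hpt : ∀ i, wg i + (if i = j then 1 else 0) + d i = wh i := by
    intro i
    by_cases hij : i = j
    · subst hij; simp only [hd, if_pos rfl, reduceIte]; omega
    · simp only [hd, if_neg hij]; have := hle i; omega
  have hsum : ∑ i, wg i + 1 + ∑ i, d i = ∑ i, wh i := by
    have h1 : ∑ i, (wg i + (if i = j then 1 else 0) + d i) = ∑ i, wh i :=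
      Finset.sum_congr rfl fun i _ => hpt i
    rw [Finset.sum_add_distrib, Finset.sum_add_distrib, Finset.sum_ite_eq'] at h1
    simpa using h1
  have hprod : g * x j * ∏ i, x i ^ d i = h := by
    have key : ∀ i : Fin m, x i ^ wg i * (if i = j then x i else 1) * x i ^ d i
        = x i ^ wh i := by
      intro i
      by_cases hij : i = j
      · subst hij
        rw [if_pos rfl, ← hpt i, if_pos rfl]
        rw [pow_add, pow_add, pow_one]
      · rw [if_neg hij, mul_one, ← pow_add, ← hpt i, if_neg hij, add_zero]
    calc g * x j * ∏ i, x i ^ d i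
        = (∏ i, x i ^ wg i) * (∏ i, (if i = j then x i else 1)) * ∏ i, x i ^ d i := by
          rw [hwg, Finset.prod_ite_eq' Finset.univ j x, if_pos (Finset.mem_univ j)]
      _ = ∏ i, (x i ^ wg i * (if i = j then x i else 1) * x i ^ d i) := by
          rw [Finset.prod_mul_distrib, Finset.prod_mul_distrib]
      _ = ∏ i, x i ^ wh i := Finset.prod_congr rfl fun i _ => key i
      _ = h := hwh
  obtain ⟨lg, hlg_len, hlg_mem, hlg_prod⟩ := exists_word x wg
  have hxj : x j ∈ Set.range x := ⟨j, rfl⟩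
  have hne' : {n | ∃ l : List G, l.length = n ∧
      (∀ a ∈ l, a ∈ Set.range x ∨ a⁻¹ ∈ Set.range x) ∧ l.prod = g * x j}.Nonempty := by
    refine ⟨(∑ i, wg i) + 1, lg ++ [x j], ?_, ?_, ?_⟩
    · simp [hlg_len]
    · intro a ha
      rcases List.mem_append.1 ha with ha | ha
      · exact Or.inl (hlg_mem a ha)
      · simp at ha; subst ha; exact Or.inl hxj
    · rw [List.prod_append, List.prod_cons, List.prod_nil, mul_one, hlg_prod, hwg]
  obtain ⟨la, hla_len, hla_mem, hla_prod⟩ :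
      ∃ l : List G, l.length = wordLength (Set.range x) (g * x j) ∧
        (∀ a ∈ l, a ∈ Set.range x ∨ a⁻¹ ∈ Set.range x) ∧ l.prod = g * x j :=
    Nat.sInf_mem hne'
  have hdead : wordLength (Set.range x) (g * x j) ≤ wordLength (Set.range x) g :=
    hg (x j) (Or.inl hxj)
  obtain ⟨ld, hld_len, hld_mem, hld_prod⟩ := exists_word x d
  have hhle : wordLength (Set.range x) h ≤ (la ++ ld).length := by
    apply Nat.sInf_le
    refine ⟨la ++ ld, rfl, ?_, ?_⟩
    · intro a ha
      rcases List.mem_append.1 ha with ha | ha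
      · exact hla_mem a ha
      · exact Or.inl (hld_mem a ha)
    · rw [List.prod_append, hla_prod, hld_prod, hprod]
  rw [List.length_append, hla_len, hld_len] at hhle
  omega

/-- In an abelian group `G` generated by `X = {x 0, …, x (m-1)}` (a list of
generators closed under inversion), geodesic representatives of dead ends can be
recorded as exponent vectors in `ℕ^m`.  If `g ≠ h` are dead ends with geodesic
exponent vectors `wg`, `wh` (i.e. `∏ i, (x i)^(w i)` represents the element and
the total number of letters `∑ i, w i` realizes the word length), then `wg` and
`wh` are crossrelated: neither is coordinatewise `≤` the other. -/
theorem dead_end_exponent_vectors_crossrelated {G : Type*} [CommGroup G]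
    {m : ℕ} (x : Fin m → G)
    (hgen : Subgroup.closure (Set.range x) = ⊤)
    (hinv : ∀ i : Fin m, (x i)⁻¹ ∈ Set.range x)
    (g h : G) (hne : g ≠ h)
    (hg : IsDeadEnd (Set.range x) g) (hh : IsDeadEnd (Set.range x) h)
    (wg wh : Fin m → ℕ)
    (hwg : ∏ i, x i ^ wg i = g) (hwg' : ∑ i, wg i = wordLength (Set.range x) g)
    (hwh : ∏ i, x i ^ wh i = h) (hwh' : ∑ i, wh i = wordLength (Set.range x) h) :
    (¬ ∀ i, wg i ≤ wh i) ∧ (¬ ∀ i, wh i ≤ wg i) := by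
  constructor
  · intro hle
    exact not_le_aux x g h hne hg wg wh hwg hwg' hwh hwh' hle
  · intro hle
    exact not_le_aux x h g hne.symm hh wh wg hwh hwh' hwg hwg' hle
end

section
/- Let G be a finitely generated group with more than one end. Then there exists a uniform bound (depending only on the generating set) on the depth of dead ends of G. -/
/-- The (unoriented) Cayley graph of `G` with respect to `X`. -/
def cayleyGraph {G : Type*} [Group G] (X : Set G) : SimpleGraph G where
  Adj a b := a ≠ b ∧ (a⁻¹ * b ∈ X ∨ b⁻¹ * a ∈ X)
  symm := ⟨fun _ _ h => ⟨h.1.symm, h.2.symm⟩⟩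
  loopless := ⟨fun _ h => h.1 rfl⟩

/-!
Two distinct ends are separated by a finite set `K`, giving two infinite components of the
complement of `K`; let `R` bound the word length of the elements of `K`. For any `g`, the
translate `g • K` separates the identity from `g • C` for one of these components `C`, so every
geodesic from `1` to a point `g * c` of `g • C` passes within distance `R` of `g`; this gives
`|g| + |c| ≤ |g * c| + 2R`. Following a geodesic towards infinity inside `C` produces `c ∈ C`
with `|c| = 2R + 1`, and then `h = g * c` is at distance `2R + 1` from `g` and strictly
further from the identity than `g`.
-/

section WordLength

variable {G : Type*} [Group G] {X : Set G}

def IsWord (X : Set G) (l : List G) : Prop :=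
  ∀ x ∈ l, x ∈ X ∨ x⁻¹ ∈ X

namespace IsWord

theorem append {l₁ l₂ : List G} (h₁ : IsWord X l₁) (h₂ : IsWord X l₂) :
    IsWord X (l₁ ++ l₂) := by
  intro x hx
  rcases List.mem_append.mp hx with hx | hx
  exacts [h₁ x hx, h₂ x hx]

theorem take {l : List G} (hl : IsWord X l) (n : ℕ) : IsWord X (l.take n) :=
  fun x hx => hl x (List.mem_of_mem_take hx)

theorem drop {l : List G} (hl : IsWord X l) (n : ℕ) : IsWord X (l.drop n) :=
  fun x hx => hl x (List.mem_of_mem_drop hx)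

theorem map_inv_reverse {l : List G} (hl : IsWord X l) : IsWord X (l.map (·⁻¹)).reverse := by
  intro x hx
  obtain ⟨y, hy, rfl⟩ := List.mem_map.mp (List.mem_reverse.mp hx)
  rw [inv_inv]
  exact (hl y hy).symm

end IsWord

theorem exists_isWord_prod_eq (hgen : Subgroup.closure X = ⊤) (g : G) :
    ∃ l, IsWord X l ∧ l.prod = g := by
  have hg : g ∈ Submonoid.closure (X ∪ X⁻¹) := by
    rw [← Subgroup.closure_toSubmonoid, hgen]
    trivial
  exact Submonoid.exists_list_of_mem_closure hg

theorem wordLength_le_length {l : List G} (hl : IsWord X l) : wordLength X l.prod ≤ l.length :=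
  Nat.sInf_le ⟨l, rfl, hl, rfl⟩

theorem exists_isWord_length_eq_wordLength (hgen : Subgroup.closure X = ⊤) (g : G) :
    ∃ l, IsWord X l ∧ l.prod = g ∧ l.length = wordLength X g := by
  obtain ⟨l, hl, hprod⟩ := exists_isWord_prod_eq hgen g
  obtain ⟨l', hlen, hl', hprod'⟩ := Nat.sInf_mem (s := {n | ∃ l : List G, l.length = n ∧
    (∀ x ∈ l, x ∈ X ∨ x⁻¹ ∈ X) ∧ l.prod = g}) ⟨l.length, l, rfl, hl, hprod⟩
  exact ⟨l', hl', hprod', hlen⟩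

theorem wordLength_mul_le (hgen : Subgroup.closure X = ⊤) (a b : G) :
    wordLength X (a * b) ≤ wordLength X a + wordLength X b := by
  obtain ⟨la, ha, rfl, hla⟩ := exists_isWord_length_eq_wordLength hgen a
  obtain ⟨lb, hb, rfl, hlb⟩ := exists_isWord_length_eq_wordLength hgen b
  rw [← hla, ← hlb, ← List.length_append, ← List.prod_append]
  exact wordLength_le_length (ha.append hb)

theorem wordLength_inv (hgen : Subgroup.closure X = ⊤) (g : G) :
    wordLength X g⁻¹ = wordLength X g := by
  have inv_le (a : G) : wordLength X a⁻¹ ≤ wordLength X a := by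
    obtain ⟨l, hl, rfl, hlen⟩ := exists_isWord_length_eq_wordLength hgen a
    calc wordLength X l.prod⁻¹ = wordLength X (l.map (·⁻¹)).reverse.prod := by
          rw [List.prod_inv_reverse]
      _ ≤ l.length := by simpa using wordLength_le_length hl.map_inv_reverse
      _ = wordLength X l.prod := hlen
  exact le_antisymm (inv_le g) (by simpa using inv_le g⁻¹)

theorem wordLength_prod_take (hgen : Subgroup.closure X = ⊤) {l : List G} (hl : IsWord X l)
    (hgeo : l.length = wordLength X l.prod) (n : ℕ) :
    wordLength X (l.take n).prod = (l.take n).length := by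
  refine le_antisymm (wordLength_le_length (hl.take n)) ?_
  have htri := wordLength_mul_le hgen (l.take n).prod (l.drop n).prod
  rw [← List.prod_append, List.take_append_drop, ← hgeo] at htri
  have hdrop := wordLength_le_length (X := X) (hl.drop n)
  have hsplit := congrArg List.length (List.take_append_drop n l)
  rw [List.length_append] at hsplit
  omega

theorem finite_setOf_wordLength_le (hX : X.Finite) (hgen : Subgroup.closure X = ⊤) (n : ℕ) :
    {g | wordLength X g ≤ n}.Finite := by
  have : Finite ↥(X ∪ X⁻¹) := (hX.union hX.inv).to_subtype
  refine ((List.finite_length_le ↥(X ∪ X⁻¹) n).image fun l => (l.map Subtype.val).prod).subset ?_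
  intro g hg
  obtain ⟨l, hl, rfl, hlen⟩ := exists_isWord_length_eq_wordLength hgen g
  lift l to List ↥(X ∪ X⁻¹) using hl
  rw [Set.mem_ofPred_eq, ← hlen] at hg
  exact ⟨l, by simpa using hg, rfl⟩

end WordLength

theorem SimpleGraph.exists_componentCompl_ne_of_mem_end {V : Type*} {Γ : SimpleGraph V}
    {e₁ e₂ : (K : (Finset V)ᵒᵖ) → Γ.componentComplFunctor.obj K} (he₁ : e₁ ∈ Γ.end)
    (he₂ : e₂ ∈ Γ.end) (hne : e₁ ≠ e₂) :
    ∃ (K : Finset V) (C₁ C₂ : Γ.ComponentCompl K), C₁ ≠ C₂ ∧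
      C₁.supp.Infinite ∧ C₂.supp.Infinite := by
  -- `SimpleGraph.end_componentCompl_infinite` is stated only for `V : Type`
  have infinite {e} (he : e ∈ Γ.end) (K : (Finset V)ᵒᵖ) : (ComponentCompl.supp (e K)).Infinite :=
    (e K).infinite_iff_in_all_ranges.mpr fun L h =>
      ⟨e (Opposite.op L), he (CategoryTheory.opHomOfLE h)⟩
  obtain ⟨K, hK⟩ := Function.ne_iff.mp hne
  exact ⟨K.unop, e₁ K, e₂ K, hK, infinite he₁ K, infinite he₂ K⟩

section CayleyGraph

variable {G : Type*} [Group G] {X : Set G}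

theorem cayleyGraph_adj_mul_or_eq {x : G} (hx : x ∈ X ∨ x⁻¹ ∈ X) (a : G) :
    (cayleyGraph X).Adj a (a * x) ∨ a * x = a := by
  by_cases h : a * x = a
  · exact Or.inr h
  · exact Or.inl ⟨Ne.symm h, by simpa using hx⟩

theorem mul_prod_take_mem_of_forall_notMem {K : Set G} {C : (cayleyGraph X).ComponentCompl K}
    {l : List G} (hl : IsWord X l) {a : G} {m : ℕ}
    (hK : ∀ t, m ≤ t → t ≤ l.length → a * (l.take t).prod ∉ K) (hC : a * l.prod ∈ C) :
    a * (l.take m).prod ∈ C := by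
  induction hd : l.length - m generalizing m with
  | zero => rwa [List.take_of_length_le (by omega)]
  | succ d ih =>
    have hm : m < l.length := by omega
    have hnext := ih (m := m + 1) (fun t ht => hK t (by omega)) (by omega)
    rw [List.prod_take_succ l m hm, ← mul_assoc] at hnext
    rcases cayleyGraph_adj_mul_or_eq (hl _ (List.getElem_mem hm)) (a * (l.take m).prod)
      with hadj | heq
    · exact SimpleGraph.ComponentCompl.mem_of_adj _ _ hnext (hK m le_rfl hm.le) hadj.symm
    · rwa [heq] at hnext

theorem exists_mem_componentCompl_wordLength_eq (hX : X.Finite) (hgen : Subgroup.closure X = ⊤)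
    {K : Set G} {R : ℕ} (hK : ∀ k ∈ K, wordLength X k ≤ R)
    {C : (cayleyGraph X).ComponentCompl K} (hC : C.supp.Infinite) {m : ℕ} (hm : R < m) :
    ∃ c ∈ C, wordLength X c = m := by
  obtain ⟨z, hzC, hz⟩ := (hC.sdiff (finite_setOf_wordLength_le hX hgen m)).nonempty
  obtain ⟨l, hl, rfl, hgeo⟩ := exists_isWord_length_eq_wordLength hgen z
  have hlen : m ≤ l.length := by simp only [Set.mem_ofPred_eq] at hz; omega
  have hprefix (t : ℕ) : wordLength X (l.take t).prod = min t l.length := by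
    rw [wordLength_prod_take hgen hl hgeo, List.length_take]
  refine ⟨(l.take m).prod, ?_, by rw [hprefix]; omega⟩
  -- prefixes of length `t > R` are too long to lie in `K`
  have hmem := mul_prod_take_mem_of_forall_notMem (C := C) hl (a := 1) (m := m)
    (fun t hmt htl hk => by have := hK _ hk; rw [one_mul, hprefix] at this; omega)
    (by rwa [one_mul])
  rwa [one_mul] at hmem

theorem wordLength_add_le_of_mem_componentCompl (hgen : Subgroup.closure X = ⊤) {K : Set G}
    {R : ℕ} (hK : ∀ k ∈ K, wordLength X k ≤ R) {C : (cayleyGraph X).ComponentCompl K}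
    {g c : G} (hg : g⁻¹ ∉ C) (hc : c ∈ C) :
    wordLength X g + wordLength X c ≤ wordLength X (g * c) + 2 * R := by
  obtain ⟨l, hl, hprod, hgeo⟩ := exists_isWord_length_eq_wordLength hgen (g * c)
  -- translated by `g⁻¹`, a geodesic from `1` to `g * c` runs from `g⁻¹ ∉ C` to `c ∈ C`
  obtain ⟨t, -, ht, hk⟩ : ∃ t, 0 ≤ t ∧ t ≤ l.length ∧ g⁻¹ * (l.take t).prod ∈ K := by
    by_contra! hcross
    have := mul_prod_take_mem_of_forall_notMem hl hcross (by rwa [hprod, inv_mul_cancel_left])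
    exact hg (by simpa using this)
  set p := (l.take t).prod with hp
  have hg_le : wordLength X g ≤ t + R := calc
    wordLength X g = wordLength X (p * (g⁻¹ * p)⁻¹) := by group
    _ ≤ wordLength X p + wordLength X (g⁻¹ * p) := by
      rw [← wordLength_inv hgen (g⁻¹ * p)]
      exact wordLength_mul_le hgen _ _
    _ ≤ t + R := add_le_add
      ((wordLength_le_length (hl.take t)).trans (List.length_take_le t l)) (hK _ hk)
  have hc_le : wordLength X c ≤ R + (l.length - t) := calc
    wordLength X c = wordLength X (g⁻¹ * p * (l.drop t).prod) := by
      rw [hp, mul_assoc, ← List.prod_append, List.take_append_drop, hprod, inv_mul_cancel_left]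
    _ ≤ wordLength X (g⁻¹ * p) + wordLength X (l.drop t).prod := wordLength_mul_le hgen _ _
    _ ≤ R + (l.length - t) := add_le_add (hK _ hk)
      ((wordLength_le_length (hl.drop t)).trans_eq (List.length_drop ..))
  omega

end CayleyGraph

/-- If a finitely generated group has more than one end, then there is a uniform
bound `N` (depending only on the generating set) on the depth of its dead ends:
every dead end `g` has some `h` at distance at most `N + 1` from `g` which lies
outside the ball of radius `wordLength X g` around the identity. -/
theorem dead_end_depth_bounded_of_more_than_one_end {G : Type*} [Group G]
    (X : Finset G) (hgen : Subgroup.closure (X : Set G) = ⊤)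
    (hends : ∃ e₁ ∈ (cayleyGraph (X : Set G)).end, ∃ e₂ ∈ (cayleyGraph (X : Set G)).end,
      e₁ ≠ e₂) :
    ∃ N : ℕ, ∀ g : G, IsDeadEnd (X : Set G) g →
      ∃ h : G, wordLength (X : Set G) (g⁻¹ * h) ≤ N + 1 ∧
        wordLength (X : Set G) g < wordLength (X : Set G) h := by
  obtain ⟨e₁, he₁, e₂, he₂, hne⟩ := hends
  obtain ⟨K, C₁, C₂, hC, hC₁, hC₂⟩ := SimpleGraph.exists_componentCompl_ne_of_mem_end he₁ he₂ hne
  set R := K.sup (wordLength (X : Set G))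
  have hK : ∀ k ∈ (K : Set G), wordLength (X : Set G) k ≤ R := fun k hk => Finset.le_sup hk
  refine ⟨2 * R, fun g _ => ?_⟩
  obtain ⟨C, hCinf, hgC⟩ : ∃ C : (cayleyGraph (X : Set G)).ComponentCompl K,
      C.supp.Infinite ∧ g⁻¹ ∉ C := by
    by_cases h : g⁻¹ ∈ C₁
    · exact ⟨C₂, hC₂, Set.disjoint_left.mp (SimpleGraph.ComponentCompl.pairwise_disjoint hC) h⟩
    · exact ⟨C₁, hC₁, h⟩
  obtain ⟨c, hcC, hc⟩ := exists_mem_componentCompl_wordLength_eq X.finite_toSet hgen hK hCinf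
    (by omega : R < 2 * R + 1)
  have hsep := wordLength_add_le_of_mem_componentCompl hgen hK hgC hcC
  exact ⟨g * c, by rw [inv_mul_cancel_left, hc], by omega⟩
end

section
/- Every permutation in S_{2k} (acting on {-k,...,-1,1,...,k}) can be represented by a word obtained by deleting some letters from the fixed word w_k = u_k u_{k-1} ⋯ u_1, where u_l is a specific reduced word in adjacent transpositions representing the transposition (-l, l). -/
/-- The adjacent transposition `σ_t` at position `t` (swapping the two pearls
next to cursor position `t`; in coordinates where the `2k` pearls occupy
`{-k, …, k-1}` it is the swap of `t-1` and `t`). -/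
def sigmaT (t : ℤ) : Equiv.Perm ℤ := Equiv.swap (t - 1) t

/-- The word `v_l = σ_{-(l-1)} σ_{-(l-2)} ⋯ σ_{l-2}`, representing the cycle
`(l-1, l-2, …, -l)`. -/
def vWord (l : ℕ) : List (Equiv.Perm ℤ) :=
  (List.range (2 * l - 2)).map fun i => sigmaT (-(l : ℤ) + 1 + i)

/-- The word `u_l = v_l σ_{l-1} v_l⁻¹` (the conjugate of `σ_{l-1}` by `v_l`),
representing the transposition `(-l, l)`. -/
def uWord (l : ℕ) : List (Equiv.Perm ℤ) :=
  vWord l ++ [sigmaT ((l : ℤ) - 1)] ++ (vWord l).reverse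

/-- The word `w_k = u_k u_{k-1} ⋯ u_1`. -/
def wWord (k : ℕ) : List (Equiv.Perm ℤ) :=
  (((List.range k).reverse).map fun i => uWord (i + 1)).flatten

/-! The induction on `k` peels off `u_k`. Given `g` supported on `{-k, …, k-1}`, a subword `w` of
`u_k` with `w(-k) = g(-k)` and `w(k-1) = g(k-1)` exists. Products act from the right end of a
word, so in `u_k = v_k σ_{k-1} v_k⁻¹` a suffix of `v_k⁻¹` first moves `-k` to any point `c` below
`k-1`, the letter `σ_{k-1}` optionally swaps `k-2` and `k-1`, and a suffix of `v_k` then carries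
`k-2` down to any `b` while shifting the points in between up by one. Since `w` only moves points
of `{-k, …, k-1}`, the permutation `w⁻¹ g` is supported on `{-(k-1), …, k-2}` and is a subword of
`w_{k-1}` by induction. -/

def ascWord (i : ℤ) (n : ℕ) : List (Equiv.Perm ℤ) :=
  (List.range n).map fun m : ℕ => sigmaT (i + m)

-- `vWord` casts the list `List.range _` itself to `List ℤ`, through the list monad.
lemma vWord_eq_ascWord (l : ℕ) : vWord l = ascWord (-(l : ℤ) + 1) (2 * l - 2) := by
  simp only [vWord, ascWord, List.pure_def, List.bind_eq_flatMap, ← List.map_eq_flatMap,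
    List.map_map]
  rfl

lemma ascWord_add (i : ℤ) (p q : ℕ) :
    ascWord i (p + q) = ascWord i p ++ ascWord (i + p) q := by
  simp only [ascWord, List.range_add, List.map_append, List.map_map, Function.comp_def,
    Nat.cast_add, add_assoc]

lemma ascWord_succ (i : ℤ) (n : ℕ) : ascWord i (n + 1) = ascWord i n ++ [sigmaT (i + n)] := by
  simp [ascWord, List.range_succ]

lemma ascWord_sublist_ascWord (i : ℤ) {d m n : ℕ} (h : d + m ≤ n) :
    (ascWord (i + d) m).Sublist (ascWord i n) := by
  obtain ⟨r, rfl⟩ := Nat.exists_eq_add_of_le h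
  rw [ascWord_add, ascWord_add]
  exact (List.sublist_append_right _ _).trans (List.sublist_append_left _ _)

lemma prod_ascWord_apply (i : ℤ) (n : ℕ) (x : ℤ) :
    (ascWord i n).prod x =
      if i - 1 ≤ x ∧ x ≤ i + n - 2 then x + 1 else if x = i + n - 1 then i - 1 else x := by
  induction n generalizing x with
  | zero => simp only [ascWord, List.range_zero, List.map_nil, List.prod_nil,
      Equiv.Perm.one_apply, Nat.cast_zero]; split_ifs <;> omega
  | succ n ih =>
    rw [ascWord_succ, List.prod_append, List.prod_singleton, Equiv.Perm.mul_apply, sigmaT,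
      Equiv.swap_apply_def]
    push_cast
    split_ifs <;> rw [ih] <;> split_ifs <;> omega

lemma prod_reverse_ascWord_apply (i : ℤ) (n : ℕ) (x : ℤ) :
    (ascWord i n).reverse.prod x =
      if i ≤ x ∧ x ≤ i + n - 1 then x - 1 else if x = i - 1 then i + n - 1 else x := by
  have hinv : (ascWord i n).reverse.prod = (ascWord i n).prod⁻¹ := by
    simp [List.prod_reverse_noncomm, ascWord, sigmaT, Function.comp_def]
  rw [hinv, Equiv.Perm.inv_def, Equiv.symm_apply_eq, prod_ascWord_apply]
  split_ifs <;> omega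

lemma exists_sublist_uWord_apply (K : ℕ) {a b : ℤ}
    (ha : -(K : ℤ) ≤ a ∧ a ≤ K - 1) (hb : -(K : ℤ) ≤ b ∧ b ≤ K - 1) (hab : a ≠ b) :
    ∃ w : List (Equiv.Perm ℤ), w.Sublist (uWord K) ∧
      w.prod (-(K : ℤ)) = a ∧ w.prod ((K : ℤ) - 1) = b := by
  have hv : ∀ n ≤ 2 * K - 2, (ascWord (-(K : ℤ) + 1) n).Sublist (vWord K) := fun n hn => by
    simpa [vWord_eq_ascWord] using ascWord_sublist_ascWord (-(K : ℤ) + 1) (d := 0) (m := n)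
      (by omega)
  by_cases hb_top : b = K - 1
  · refine ⟨(ascWord (-(K : ℤ) + 1) (a + K).toNat).reverse,
      ((hv _ (by omega)).reverse).trans (List.sublist_append_right _ _), ?_, ?_⟩ <;>
    · rw [prod_reverse_ascWord_apply]; split_ifs <;> omega
  -- the suffix of `v_K⁻¹` sends `-K` to `c`, which `σ_{K-1}` and the shift then carry to `a`
  obtain ⟨c, hc⟩ : ∃ c : ℤ,
      (a = K - 1 ∧ c = K - 2) ∨ (a < b ∧ c = a) ∨ (b < a ∧ a < K - 1 ∧ c = a - 1) := by
    rcases eq_or_ne a (K - 1) with h | h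
    · exact ⟨_, .inl ⟨h, rfl⟩⟩
    rcases hab.lt_or_gt with h' | h'
    · exact ⟨_, .inr (.inl ⟨h', rfl⟩)⟩
    · exact ⟨_, .inr (.inr ⟨h', by omega, rfl⟩)⟩
  have hshift : (ascWord (b + 1) (K - 2 - b).toNat).Sublist (vWord K) := by
    have := ascWord_sublist_ascWord (-(K : ℤ) + 1) (d := (b + K).toNat)
      (m := (K - 2 - b).toNat) (n := 2 * K - 2) (by omega)
    rwa [show -(K : ℤ) + 1 + (b + K).toNat = b + 1 by omega, ← vWord_eq_ascWord] at this
  refine ⟨ascWord (b + 1) (K - 2 - b).toNat ++ [sigmaT (K - 1)] ++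
      (ascWord (-(K : ℤ) + 1) (c + K).toNat).reverse,
    (hshift.append (List.Sublist.refl _)).append (hv (c + K).toNat (by omega)).reverse, ?_, ?_⟩ <;>
  · rw [List.prod_append, List.prod_append, List.prod_singleton, Equiv.Perm.mul_apply,
      Equiv.Perm.mul_apply, prod_reverse_ascWord_apply, sigmaT, Equiv.swap_apply_def]
    split_ifs <;> rw [prod_ascWord_apply] <;> split_ifs <;> omega

lemma prod_apply_eq_self_of_sublist_uWord {K : ℕ} (hK : 0 < K) {w : List (Equiv.Perm ℤ)}
    (hw : w.Sublist (uWord K)) {x : ℤ} (hx : x < -(K : ℤ) ∨ (K : ℤ) - 1 < x) :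
    w.prod x = x := by
  have hmem : w.prod ∈ MulAction.stabilizer (Equiv.Perm ℤ) x := by
    refine list_prod_mem fun q hq => ?_
    rw [MulAction.mem_stabilizer_iff, Equiv.Perm.smul_def]
    have := hw.subset hq
    simp only [uWord, vWord_eq_ascWord, ascWord, List.mem_append, List.mem_reverse, List.mem_map,
      List.mem_range, List.mem_singleton] at this
    rcases this with (⟨m, hm, rfl⟩ | rfl) | ⟨m, hm, rfl⟩
    all_goals rw [sigmaT, Equiv.swap_apply_of_ne_of_ne] <;> omega
  simpa [Equiv.Perm.smul_def] using hmem

lemma exists_sublist_uWord_inv_mul_supported (k : ℕ) {g : Equiv.Perm ℤ}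
    (hg : ∀ x : ℤ, g x ≠ x → -((k + 1 : ℕ) : ℤ) ≤ x ∧ x ≤ ((k + 1 : ℕ) : ℤ) - 1) :
    ∃ w : List (Equiv.Perm ℤ), w.Sublist (uWord (k + 1)) ∧
      ∀ x : ℤ, (w.prod⁻¹ * g) x ≠ x → -(k : ℤ) ≤ x ∧ x ≤ (k : ℤ) - 1 := by
  have hg_mapsTo : ∀ x : ℤ, -((k + 1 : ℕ) : ℤ) ≤ x ∧ x ≤ ((k + 1 : ℕ) : ℤ) - 1 →
      -((k + 1 : ℕ) : ℤ) ≤ g x ∧ g x ≤ ((k + 1 : ℕ) : ℤ) - 1 := fun x hx => by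
    by_cases hgx : g x = x
    · rwa [hgx]
    · exact hg (g x) (mt (fun h => g.injective h) hgx)
  have hg_ne : g (-((k + 1 : ℕ) : ℤ)) ≠ g (((k + 1 : ℕ) : ℤ) - 1) :=
    g.injective.ne (by omega)
  obtain ⟨w, hw, hw_bot, hw_top⟩ := exists_sublist_uWord_apply (k + 1)
    (hg_mapsTo _ (by omega)) (hg_mapsTo _ (by omega)) hg_ne
  refine ⟨w, hw, fun x hx => ?_⟩
  by_contra hx_out
  rw [Equiv.Perm.mul_apply, Equiv.Perm.inv_def, ne_eq, Equiv.symm_apply_eq] at hx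
  rcases eq_or_ne x (-((k + 1 : ℕ) : ℤ)) with rfl | h_bot
  · exact hx hw_bot.symm
  rcases eq_or_ne x (((k + 1 : ℕ) : ℤ) - 1) with rfl | h_top
  · exact hx hw_top.symm
  have hx_out' : x < -((k + 1 : ℕ) : ℤ) ∨ ((k + 1 : ℕ) : ℤ) - 1 < x := by omega
  have hgx : g x = x := by_contra fun hgx => by have := hg x hgx; omega
  rw [hgx, prod_apply_eq_self_of_sublist_uWord k.succ_pos hw hx_out'] at hx
  exact hx rfl

lemma wWord_succ (k : ℕ) : wWord (k + 1) = uWord (k + 1) ++ wWord k := by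
  simp [wWord, List.range_succ]

/-- Every permutation of the `2k` pearls (supported on `{-k, …, k-1}` in these
coordinates) is represented by a word obtained from `w_k` by deleting some
letters. -/
theorem exists_sublist_word (k : ℕ) (g : Equiv.Perm ℤ)
    (hg : ∀ x : ℤ, g x ≠ x → -(k : ℤ) ≤ x ∧ x ≤ (k : ℤ) - 1) :
    ∃ w' : List (Equiv.Perm ℤ), w'.Sublist (wWord k) ∧ w'.prod = g := by
  induction k generalizing g with
  | zero =>
    refine ⟨[], List.nil_sublist _, Equiv.ext fun x => ?_⟩
    by_contra hx
    have := hg x (Ne.symm hx)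
    omega
  | succ k ih =>
    obtain ⟨w, hw, hg'⟩ := exists_sublist_uWord_inv_mul_supported k hg
    obtain ⟨w', hw', hw'_prod⟩ := ih _ hg'
    refine ⟨w ++ w', wWord_succ k ▸ hw.append hw', ?_⟩
    rw [List.prod_append, hw'_prod, mul_inv_cancel_left]
end

section
/- For n ≥ 3, the Houghton group H_n is generated by the shifts s_1, ..., s_n; in particular the commutator [s_i, s_{i+1}] acts as the transposition of the points (0, i) and (0, i+1), so the subgroup generated by the shifts contains all finitary permutations of the underlying set. -/
/-- The set of elements of `Equiv.Perm (ℕ × Fin n)` belonging to the Houghton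
group `H_n`: permutations `φ` of the disjoint union of `n` copies of `ℕ` for
which there are integers `t 1, …, t n` with `φ (k, l) = (k + t l, l)` for all
but finitely many points `(k, l)`. -/
def houghtonSet (n : ℕ) : Set (Equiv.Perm (ℕ × Fin n)) :=
  {φ | ∃ t : Fin n → ℤ,
    {p : ℕ × Fin n |
      ¬((0 : ℤ) ≤ (p.1 : ℤ) + t p.2 ∧ φ p = (((p.1 : ℤ) + t p.2).toNat, p.2))}.Finite}

/-!
The commutator of consecutive shifts `s i`, `s (i + 1)` is the transposition of `(0, i)` and
`(0, i + 1)`. Conjugating it by powers of `(s i)⁻¹` and chaining transpositions yields every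
transposition, hence every finitary permutation. The shift `s i` eventually translates by
`e (i + 1) - e i`; these vectors together with `e 0` span `ℤⁿ`, so every element of `H_n` is a
product of shifts times a permutation that eventually translates ray `0` alone. Such a
permutation translates by `0`, since otherwise it would move points into or out of a large finite
box; so it is finitary.
-/

open Equiv Filter

theorem Equiv.Perm.mem_of_apply_mem_of_mapsTo {α : Type*} {σ : Perm α} {s : Set α}
    (hs : s.Finite) (hσ : Set.MapsTo σ s s) {x : α} (hx : σ x ∈ s) : x ∈ s := by
  obtain ⟨y, hy, hyx⟩ := ((hs.injOn_iff_bijOn_of_mapsTo hσ).mp σ.injective.injOn).surjOn hx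
  exact σ.injective hyx ▸ hy

theorem Subgroup.swap_apply_mem {α : Type*} [DecidableEq α] (G : Subgroup (Perm α))
    {g : Perm α} (hg : g ∈ G) {x y : α} (h : swap x y ∈ G) : swap (g x) (g y) ∈ G := by
  rw [swap_apply_apply]
  exact G.mul_mem (G.mul_mem hg h) (G.inv_mem hg)

theorem Fin.add_one_add_one_ne_self {n : ℕ} [NeZero n] (hn : 2 < n) (i : Fin n) :
    i + 1 + 1 ≠ i := by
  rw [add_assoc, Ne, add_eq_left, Fin.ext_iff, Fin.val_add, Fin.val_one', Fin.val_zero,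
    Nat.mod_eq_of_lt (by omega : 1 < n), Nat.mod_eq_of_lt hn]
  omega

section EventualTranslation

variable {n : ℕ}

def IsEventuallyTranslation (φ : Perm (ℕ × Fin n)) (t : Fin n → ℤ) : Prop :=
  ∀ᶠ p in cofinite, (φ p).2 = p.2 ∧ ((φ p).1 : ℤ) = p.1 + t p.2

namespace IsEventuallyTranslation

variable {φ ψ : Perm (ℕ × Fin n)} {t u : Fin n → ℤ}

theorem one : IsEventuallyTranslation (1 : Perm (ℕ × Fin n)) 0 :=
  Eventually.of_forall fun _ => by simp

theorem mul (hφ : IsEventuallyTranslation φ t) (hψ : IsEventuallyTranslation ψ u) :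
    IsEventuallyTranslation (φ * ψ) (t + u) := by
  filter_upwards [hψ, ψ.injective.tendsto_cofinite.eventually hφ] with p ⟨hψ2, hψ1⟩ ⟨hφ2, hφ1⟩
  simp only [Perm.mul_apply, Pi.add_apply]
  exact ⟨hφ2.trans hψ2, by rw [hφ1, hψ1, hψ2]; ring⟩

theorem inv (hφ : IsEventuallyTranslation φ t) : IsEventuallyTranslation φ⁻¹ (-t) := by
  filter_upwards [φ⁻¹.injective.tendsto_cofinite.eventually hφ] with p ⟨h2, h1⟩
  simp only [Perm.coe_inv, apply_symm_apply, Pi.neg_apply] at h1 h2 ⊢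
  rw [← h2] at h1
  exact ⟨h2.symm, by omega⟩

theorem finite_support (hφ : IsEventuallyTranslation φ 0) : {p | φ p ≠ p}.Finite := by
  refine eventually_cofinite.mp ?_
  filter_upwards [hφ] with p ⟨h2, h1⟩
  exact Prod.ext (by simpa using h1) h2

/-- Otherwise `φ` would map the finite box `{p | p.1 ≤ B}` into, hence onto, itself, while a
point beyond the box on ray `l₀` is moved into it. -/
theorem nonneg_of_single {l₀ : Fin n} {c : ℤ}
    (hφ : IsEventuallyTranslation φ (Pi.single l₀ c)) : 0 ≤ c := by
  by_contra! hc
  have hle : ∀ l, (Pi.single l₀ c : Fin n → ℤ) l ≤ 0 := fun l => by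
    rcases eq_or_ne l l₀ with rfl | h
    · simpa using hc.le
    · simp [h]
  obtain ⟨B, hB⟩ := ((eventually_cofinite.mp hφ).image fun p => max p.1 (φ p).1).bddAbove
  have htrans : ∀ p, B < max p.1 (φ p).1 →
      (φ p).2 = p.2 ∧ ((φ p).1 : ℤ) = p.1 + (Pi.single l₀ c : Fin n → ℤ) p.2 :=
    fun p hp => by_contra fun h => hp.not_ge (hB ⟨p, h, rfl⟩)
  have hbox : Set.MapsTo φ {p | p.1 ≤ B} {p | p.1 ≤ B} := by
    intro p (hp : p.1 ≤ B)
    show (φ p).1 ≤ B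
    by_contra! h
    have := (htrans p (lt_max_of_lt_right h)).2
    have := hle p.2
    omega
  have hfin : {p : ℕ × Fin n | p.1 ≤ B}.Finite :=
    ((Set.finite_Iic B).prod Set.finite_univ).subset fun p hp => ⟨hp, trivial⟩
  have hq := (htrans (B + (-c).toNat, l₀) (lt_max_of_lt_left (by omega))).2
  rw [Pi.single_eq_same] at hq
  have := φ.mem_of_apply_mem_of_mapsTo hfin hbox (x := (B + (-c).toNat, l₀)) (by
    show (φ _).1 ≤ B
    omega)
  exact (show ¬B + (-c).toNat ≤ B by omega) this

theorem eq_zero_of_single {l₀ : Fin n} {c : ℤ}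
    (hφ : IsEventuallyTranslation φ (Pi.single l₀ c)) : c = 0 := by
  have hinv := hφ.inv
  rw [← Pi.single_neg] at hinv
  have := hinv.nonneg_of_single
  have := hφ.nonneg_of_single
  omega

end IsEventuallyTranslation

theorem mem_houghtonSet_iff {φ : Perm (ℕ × Fin n)} :
    φ ∈ houghtonSet n ↔ ∃ t, IsEventuallyTranslation φ t := by
  refine exists_congr fun t => ?_
  rw [IsEventuallyTranslation, eventually_cofinite]
  refine Iff.of_eq (congrArg _ (Set.ext fun p => not_congr ?_))
  rw [Prod.ext_iff]
  constructor
  · rintro ⟨h0, h1, h2⟩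
    exact ⟨h2, by simp only at h1; omega⟩
  · rintro ⟨h2, h1⟩
    exact ⟨by omega, by omega, h2⟩

variable (n) in
def houghtonSubgroup : Subgroup (Perm (ℕ × Fin n)) where
  carrier := {φ | ∃ t, IsEventuallyTranslation φ t}
  one_mem' := ⟨0, .one⟩
  mul_mem' := fun ⟨t, ht⟩ ⟨u, hu⟩ => ⟨t + u, ht.mul hu⟩
  inv_mem' := fun ⟨t, ht⟩ => ⟨-t, ht.inv⟩

theorem coe_houghtonSubgroup : (houghtonSubgroup n : Set (Perm (ℕ × Fin n))) = houghtonSet n :=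
  Set.ext fun _ => mem_houghtonSet_iff.symm

def translationVectors (G : Subgroup (Perm (ℕ × Fin n))) : AddSubgroup (Fin n → ℤ) where
  carrier := {t | ∃ φ ∈ G, IsEventuallyTranslation φ t}
  zero_mem' := ⟨1, G.one_mem, .one⟩
  add_mem' := fun ⟨φ, hφG, hφ⟩ ⟨ψ, hψG, hψ⟩ => ⟨φ * ψ, G.mul_mem hφG hψG, hφ.mul hψ⟩
  neg_mem' := fun ⟨φ, hφG, hφ⟩ => ⟨φ⁻¹, G.inv_mem hφG, hφ.inv⟩

open Fin.NatCast in
theorem sub_single_sum_mem [NeZero n] {V : AddSubgroup (Fin n → ℤ)}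
    (hV : ∀ i : Fin n, Pi.single (i + 1) 1 - Pi.single i 1 ∈ V) (t : Fin n → ℤ) :
    t - Pi.single 0 (∑ l, t l) ∈ V := by
  have hray : ∀ k : ℕ, Pi.single (k : Fin n) 1 - Pi.single 0 1 ∈ V := by
    intro k
    induction k with
    | zero => simp
    | succ k ih => simpa [Nat.cast_succ] using V.add_mem (hV k) ih
  have hsum : t - Pi.single 0 (∑ l, t l) = ∑ l, t l • (Pi.single l 1 - Pi.single 0 1) := by
    ext j
    simp [Finset.sum_apply, Pi.single_apply, Finset.sum_sub_distrib, mul_sub]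
  rw [hsum]
  exact V.sum_mem fun l _ => V.zsmul_mem (Fin.cast_val_eq_self l ▸ hray l) _

theorem houghtonSubgroup_le [NeZero n] {G : Subgroup (Perm (ℕ × Fin n))}
    (hfin : ∀ φ : Perm (ℕ × Fin n), {p | φ p ≠ p}.Finite → φ ∈ G)
    (hG : ∀ i : Fin n, Pi.single (i + 1) 1 - Pi.single i 1 ∈ translationVectors G) :
    houghtonSubgroup n ≤ G := by
  rintro φ ⟨t, hφ⟩
  obtain ⟨ψ, hψG, hψ⟩ := sub_single_sum_mem hG t
  have hρ : IsEventuallyTranslation (φ * ψ⁻¹) (Pi.single 0 (∑ l, t l)) := by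
    simpa using hφ.mul hψ.inv
  rw [hρ.eq_zero_of_single, Pi.single_zero] at hρ
  simpa using G.mul_mem (hfin _ hρ.finite_support) hψG

end EventualTranslation

section Shift

variable {n : ℕ} [NeZero n]

structure IsShift (σ : Perm (ℕ × Fin n)) (i : Fin n) : Prop where
  apply_zero : σ (0, i) = (0, i + 1)
  apply_succ : ∀ k : ℕ, σ (k + 1, i) = (k, i)
  apply_next : ∀ k : ℕ, σ (k, i + 1) = (k + 1, i + 1)
  apply_of_ne : ∀ (k : ℕ) (l : Fin n), l ≠ i → l ≠ i + 1 → σ (k, l) = (k, l)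

namespace IsShift

variable {σ : Perm (ℕ × Fin n)} {i : Fin n}

theorem add_one_ne (h : IsShift σ i) : i + 1 ≠ i := by
  intro he
  have := h.apply_next 1
  rw [he, h.apply_succ] at this
  simp at this

theorem inv_apply_next_zero (h : IsShift σ i) : σ⁻¹ (0, i + 1) = (0, i) :=
  Perm.inv_eq_iff_eq.mpr h.apply_zero.symm

theorem inv_apply (h : IsShift σ i) (k : ℕ) : σ⁻¹ (k, i) = (k + 1, i) :=
  Perm.inv_eq_iff_eq.mpr (h.apply_succ k).symm

theorem inv_apply_next_succ (h : IsShift σ i) (k : ℕ) : σ⁻¹ (k + 1, i + 1) = (k, i + 1) :=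
  Perm.inv_eq_iff_eq.mpr (h.apply_next k).symm

theorem inv_apply_of_ne (h : IsShift σ i) (k : ℕ) {l : Fin n} (h₁ : l ≠ i) (h₂ : l ≠ i + 1) :
    σ⁻¹ (k, l) = (k, l) :=
  Perm.inv_eq_iff_eq.mpr (h.apply_of_ne k l h₁ h₂).symm

theorem isEventuallyTranslation (h : IsShift σ i) :
    IsEventuallyTranslation σ (Pi.single (i + 1) 1 - Pi.single i 1) := by
  have hne := h.add_one_ne
  filter_upwards [eventually_cofinite_ne ((0 : ℕ), i)] with ⟨k, l⟩ hp
  obtain rfl | hl₀ := eq_or_ne l i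
  · obtain ⟨k, rfl⟩ : ∃ k', k = k' + 1 := Nat.exists_eq_succ_of_ne_zero (by simpa using hp)
    simp [h.apply_succ, hne]
  obtain rfl | hl₁ := eq_or_ne l (i + 1)
  · simp [h.apply_next, hne]
  · simp [h.apply_of_ne k l hl₀ hl₁, hl₀, hl₁]

theorem commutator_eq_swap {τ : Perm (ℕ × Fin n)} (hσ : IsShift σ i) (hτ : IsShift τ (i + 1))
    (hn : 2 < n) : σ⁻¹ * τ⁻¹ * σ * τ = swap (0, i) (0, i + 1) := by
  have h₁ := hσ.add_one_ne
  have h₂ := hτ.add_one_ne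
  have h₃ := Fin.add_one_add_one_ne_self hn i
  ext ⟨k, l⟩ : 1
  simp only [Perm.mul_apply]
  obtain rfl | hl₀ := eq_or_ne l i
  · cases k <;> simp [hσ.apply_zero, hσ.apply_succ, hσ.inv_apply, hσ.inv_apply_next_succ,
      hτ.apply_of_ne, hτ.inv_apply, hτ.inv_apply_of_ne, h₁.symm, h₃.symm, swap_apply_of_ne_of_ne]
  obtain rfl | hl₁ := eq_or_ne l (i + 1)
  · cases k <;> simp [hτ.apply_zero, hτ.apply_succ, hσ.apply_next, hσ.apply_of_ne,
      hτ.inv_apply_next_zero, hσ.inv_apply_next_zero, hτ.inv_apply, hσ.inv_apply_next_succ,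
      h₁, h₂, h₃, swap_apply_of_ne_of_ne]
  obtain rfl | hl₂ := eq_or_ne l (i + 1 + 1)
  · simp [hτ.apply_next, hσ.apply_of_ne, hτ.inv_apply_next_succ, hσ.inv_apply_of_ne, h₂, h₃,
      swap_apply_of_ne_of_ne]
  · simp [hτ.apply_of_ne, hσ.apply_of_ne, hτ.inv_apply_of_ne, hσ.inv_apply_of_ne, hl₀, hl₁, hl₂,
      swap_apply_of_ne_of_ne]

end IsShift

namespace Houghton

variable {s : Fin n → Perm (ℕ × Fin n)} (hs : ∀ i, IsShift (s i) i)
  {G : Subgroup (Perm (ℕ × Fin n))} (hG : ∀ i, s i ∈ G) (hn : 2 < n)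
include hs hG hn

theorem swap_zero_mem (i : Fin n) : swap (0, i) (0, i + 1) ∈ G := by
  rw [← (hs i).commutator_eq_swap (hs (i + 1)) hn]
  exact G.mul_mem (G.mul_mem (G.mul_mem (G.inv_mem (hG i)) (G.inv_mem (hG _))) (hG i)) (hG _)

theorem swap_succ_mem (i : Fin n) (k : ℕ) : swap (k + 1, i) (k, i) ∈ G := by
  have hinv := G.inv_mem (hG i)
  induction k with
  | zero => simpa [(hs i).inv_apply, (hs i).inv_apply_next_zero] using
      G.swap_apply_mem hinv (swap_zero_mem hs hG hn i)
  | succ k ih => simpa [(hs i).inv_apply] using G.swap_apply_mem hinv ih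

open Fin.NatCast in
theorem swap_mem (p q : ℕ × Fin n) : swap p q ∈ G := by
  have down : ∀ (k : ℕ) (l : Fin n), swap (k, l) (0, l) ∈ G := by
    intro k l
    induction k with
    | zero => rw [swap_self]; exact G.one_mem
    | succ k ih => exact SubmonoidClass.swap_mem_trans G (swap_succ_mem hs hG hn l k) ih
  have across : ∀ k : ℕ, swap (0, (k : Fin n)) (0, 0) ∈ G := by
    intro k
    induction k with
    | zero => rw [Nat.cast_zero, swap_self]; exact G.one_mem
    | succ k ih =>
      rw [Nat.cast_succ]
      refine SubmonoidClass.swap_mem_trans G ?_ ih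
      rw [swap_comm]
      exact swap_zero_mem hs hG hn _
  have to_origin : ∀ p : ℕ × Fin n, swap p (0, 0) ∈ G := fun ⟨k, l⟩ =>
    SubmonoidClass.swap_mem_trans G (down k l) (Fin.cast_val_eq_self l ▸ across l)
  exact SubmonoidClass.swap_mem_trans G (to_origin p) (by rw [swap_comm]; exact to_origin q)

theorem mem_of_finite_support {φ : Perm (ℕ × Fin n)} (hφ : {p | φ p ≠ p}.Finite) : φ ∈ G := by
  refine (Subgroup.closure_le G).mpr ?_ (mem_closure_isSwap'.mpr hφ)
  rintro _ ⟨p, q, -, rfl⟩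
  exact swap_mem hs hG hn p q

end Houghton

end Shift

/-- For `n ≥ 3` (written `n = m + 3`) the Houghton group `H_n` is generated by
the shifts `s_1, …, s_n` (here specified by their defining action, ray indices
taken mod `n`): the commutator `[s_i, s_{i+1}] = s_i⁻¹ s_{i+1}⁻¹ s_i s_{i+1}`
acts as the transposition of `(0, i)` and `(0, i+1)`, hence the subgroup
generated by the shifts contains all finitary permutations and equals `H_n`. -/
theorem houghton_generated_by_shifts (m : ℕ)
    (s : Fin (m + 3) → Equiv.Perm (ℕ × Fin (m + 3)))
    (hs0 : ∀ i : Fin (m + 3), s i (0, i) = (0, i + 1))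
    (hs1 : ∀ (i : Fin (m + 3)) (k : ℕ), s i (k + 1, i) = (k, i))
    (hs2 : ∀ (i : Fin (m + 3)) (k : ℕ), s i (k, i + 1) = (k + 1, i + 1))
    (hs3 : ∀ (i : Fin (m + 3)) (k : ℕ) (l : Fin (m + 3)),
      l ≠ i → l ≠ i + 1 → s i (k, l) = (k, l)) :
    (∀ i : Fin (m + 3), (s i)⁻¹ * (s (i + 1))⁻¹ * s i * s (i + 1)
        = Equiv.swap ((0 : ℕ), i) ((0 : ℕ), i + 1)) ∧
    (∀ φ : Equiv.Perm (ℕ × Fin (m + 3)), {p : ℕ × Fin (m + 3) | φ p ≠ p}.Finite →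
        φ ∈ Subgroup.closure (Set.range s)) ∧
    ((Subgroup.closure (Set.range s) : Set (Equiv.Perm (ℕ × Fin (m + 3))))
        = houghtonSet (m + 3)) := by
  have hs : ∀ i, IsShift (s i) i := fun i => ⟨hs0 i, hs1 i, hs2 i, hs3 i⟩
  have hn : 2 < m + 3 := by omega
  have hG : ∀ i, s i ∈ Subgroup.closure (Set.range s) := fun i => Subgroup.subset_closure ⟨i, rfl⟩
  have hfin : ∀ φ : Perm (ℕ × Fin (m + 3)), {p | φ p ≠ p}.Finite →
      φ ∈ Subgroup.closure (Set.range s) := fun _ => Houghton.mem_of_finite_support hs hG hn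
  refine ⟨fun i => (hs i).commutator_eq_swap (hs (i + 1)) hn, hfin, ?_⟩
  rw [← coe_houghtonSubgroup, SetLike.coe_set_eq]
  refine le_antisymm ?_ (houghtonSubgroup_le hfin fun i =>
    ⟨s i, hG i, (hs i).isEventuallyTranslation⟩)
  exact (Subgroup.closure_le _).mpr fun _ ⟨i, hi⟩ => hi ▸ ⟨_, (hs i).isEventuallyTranslation⟩
end
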